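/- Strong barbed equivalence is undecidable in HOcore with 2 hidden names: for the two-element set of hidden names H = {hd, c}, and for any effective encoding of HOcore processes as natural numbers, the set of codes of pairs (P, Q) of HOcore processes such that P and Q are strongly barbed equivalent w.r.t. H is not a computable (decidable) set. -/

import Mathlib

/-! ### HOcore: syntax, LTS, barbs, barbed bisimilarity -/

/-- Channel names of HOcore. -/
abbrev Name := ℕ

/-- HOcore processes, with de Bruijn indices for process variables. -/
inductive Proc : Type
  | nil : Proc
  | pvar : ℕ → Proc
  | par : Proc → Proc → Proc
  | inp : Name → Proc → Proc
  | out : Name → Proc → Proc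
  deriving DecidableEq

namespace Proc

/-- Shift the free de Bruijn indices `≥ k` by `d`. -/
def lift (d : ℕ) : ℕ → Proc → Proc
  | _, nil => nil
  | k, pvar n => if n < k then pvar n else pvar (n + d)
  | k, par P Q => par (lift d k P) (lift d k Q)
  | k, inp a P => inp a (lift d (k + 1) P)
  | k, out a P => out a (lift d k P)

/-- Capture-avoiding substitution of `S` for the de Bruijn index `k` in `P`. -/
def subst : Proc → ℕ → Proc → Proc
  | nil, _, _ => nil
  | pvar n, k, S => if n = k then lift k 0 S else if k < n then pvar (n - 1) else pvar n
  | par P Q, k, S => par (subst P k S) (subst Q k S)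
  | inp a P, k, S => inp a (subst P (k + 1) S)
  | out a P, k, S => out a (subst P k S)

/-- Free channel names of a process. -/
def fnames : Proc → Finset Name
  | nil => ∅
  | pvar _ => ∅
  | par P Q => fnames P ∪ fnames Q
  | inp a P => insert a (fnames P)
  | out a P => insert a (fnames P)

end Proc

/-- Labels of the HOcore LTS: internal step, output, input. -/
inductive Label
  | tau : Label
  | outl : Name → Proc → Label
  | inl : Name → Proc → Label

/-- Structural congruence: parallel composition is associative, commutative,
and has `nil` as a neutral element. -/
inductive SCong : Proc → Proc → Prop
  | refl (P) : SCong P P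
  | symm {P Q} : SCong P Q → SCong Q P
  | trans {P Q R} : SCong P Q → SCong Q R → SCong P R
  | parComm (P Q) : SCong (.par P Q) (.par Q P)
  | parAssoc (P Q R) : SCong (.par (.par P Q) R) (.par P (.par Q R))
  | parNil (P) : SCong (.par P .nil) P
  | parCong {P P' Q Q'} : SCong P P' → SCong Q Q' → SCong (.par P Q) (.par P' Q')
  | inpCong {P P'} (a) : SCong P P' → SCong (.inp a P) (.inp a P')
  | outCong {P P'} (a) : SCong P P' → SCong (.out a P) (.out a P')

/-- The labeled transition system of HOcore (processes are considered up to
structural congruence). -/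
inductive Step : Proc → Label → Proc → Prop
  | outS (a P) : Step (.out a P) (.outl a P) .nil
  | inpS (a Q P) : Step (.inp a Q) (.inl a P) (Q.subst 0 P)
  | parL {P l P'} (Q) : Step P l P' → Step (.par P Q) l (.par P' Q)
  | parR {Q l Q'} (P) : Step Q l Q' → Step (.par P Q) l (.par P Q')
  | comm1 {P Q P' Q' a R} : Step P (.outl a R) P' → Step Q (.inl a R) Q' →
      Step (.par P Q) .tau (.par P' Q')
  | comm2 {P Q P' Q' a R} : Step P (.inl a R) P' → Step Q (.outl a R) Q' →
      Step (.par P Q) .tau (.par P' Q')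
  | struct {P P' l Q Q'} : SCong P P' → Step P' l Q' → SCong Q' Q → Step P l Q

/-- One internal step. -/
def TauStep (P Q : Proc) : Prop := Step P Label.tau Q

/-- Weak internal transition `==tau==>`. -/
def WTau : Proc → Proc → Prop := Relation.ReflTransGen TauStep

/-- Observables: input on a name, or output on a name (a coname). -/
inductive Barb
  | inb : Name → Barb
  | outb : Name → Barb
  deriving DecidableEq

/-- Strong observable action w.r.t. a set `H` of hidden names. -/
def StrongBarb (H : Set Name) (P : Proc) : Barb → Prop
  | .inb a => a ∉ H ∧ ∃ Q R, Step P (Label.inl a Q) R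
  | .outb a => a ∉ H ∧ ∃ Q R, Step P (Label.outl a Q) R

/-- Weak observable action w.r.t. a set `H` of hidden names. -/
def WeakBarb (H : Set Name) (P : Proc) (α : Barb) : Prop :=
  ∃ P', WTau P P' ∧ StrongBarb H P' α

/-- Barbed bisimulation w.r.t. the hidden names `H`. -/
def IsBarbedBisim (H : Set Name) (R : Proc → Proc → Prop) : Prop :=
  Symmetric R ∧ ∀ P Q, R P Q →
    (∀ α, StrongBarb H P α → WeakBarb H Q α) ∧
    (∀ S : Proc, ((S.fnames : Set Name) ∩ H = ∅) → R (.par P S) (.par Q S)) ∧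
    (∀ P', Step P Label.tau P' → ∃ Q', WTau Q Q' ∧ R P' Q')

/-- Barbed equivalence w.r.t. the hidden names `H`. -/
def BarbedEquiv (H : Set Name) (P Q : Proc) : Prop :=
  ∃ R, IsBarbedBisim H R ∧ R P Q

/-! ### Statement 2: undecidability of strong barbed equivalence with 2 hidden names -/

/-- Strong barbed bisimulation w.r.t. the hidden names `H`. -/
def IsStrongBarbedBisim (H : Set Name) (R : Proc → Proc → Prop) : Prop :=
  Symmetric R ∧ ∀ P Q, R P Q →
    (∀ α, StrongBarb H P α → StrongBarb H Q α) ∧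
    (∀ S : Proc, ((S.fnames : Set Name) ∩ H = ∅) → R (.par P S) (.par Q S)) ∧
    (∀ P', Step P Label.tau P' → ∃ Q', Step Q Label.tau Q' ∧ R P' Q')

/-- Strong barbed equivalence w.r.t. the hidden names `H`. -/
def StrongBarbedEquiv (H : Set Name) (P Q : Proc) : Prop :=
  ∃ R, IsStrongBarbedBisim H R ∧ R P Q

def hdN : Name := 0
def cN : Name := 1

/-- A canonical effective Gödel numbering of HOcore processes. -/
def encodeProc : Proc → ℕ
  | .nil => 0
  | .pvar n => 5 * n + 1
  | .par P Q => 5 * Nat.pair (encodeProc P) (encodeProc Q) + 2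
  | .inp a P => 5 * Nat.pair a (encodeProc P) + 3
  | .out a P => 5 * Nat.pair a (encodeProc P) + 4

/-!
Reduction from the halting problem. A `Turing.ToPartrec` program is compiled into HOcore
processes that use only the hidden channels `hd` and `c`, as registers, so that every
intermediate state is a single redex: it has exactly one τ-step and no visible barb, and a
context that avoids `hd` and `c` can neither observe nor disturb it. Compiling the program with
`out 2 nil` and with `nil` as the halting continuation gives two processes that are strongly
barbed equivalent exactly when the program diverges: then pairing corresponding states next to
a common context is a bisimulation, whereas along a halting run the bisimulation game must reach
a state where only the first process shows the barb `2!`.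
-/

namespace Proc

def FreeVarsLt : ℕ → Proc → Prop
  | _, nil => True
  | k, pvar n => n < k
  | k, par P Q => FreeVarsLt k P ∧ FreeVarsLt k Q
  | k, inp _ P => FreeVarsLt (k + 1) P
  | k, out _ P => FreeVarsLt k P

theorem FreeVarsLt.mono {P : Proc} {k k' : ℕ} (h : k ≤ k') (hP : FreeVarsLt k P) :
    FreeVarsLt k' P := by
  induction P generalizing k k' with
  | nil => trivial
  | pvar n => exact lt_of_lt_of_le hP h
  | par P Q ihP ihQ => exact ⟨ihP h hP.1, ihQ h hP.2⟩
  | inp a P ih => exact ih (Nat.succ_le_succ h) hP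
  | out a P ih => exact ih h hP

theorem lift_eq_self {P : Proc} {k k' : ℕ} (d : ℕ) (hP : FreeVarsLt k P) (h : k ≤ k') :
    lift d k' P = P := by
  induction P generalizing k k' with
  | nil => rfl
  | pvar n => simp [lift, lt_of_lt_of_le (show n < k from hP) h]
  | par P Q ihP ihQ => simp [lift, ihP hP.1 h, ihQ hP.2 h]
  | inp a P ih => simp [lift, ih (show FreeVarsLt (k + 1) P from hP) (Nat.succ_le_succ h)]
  | out a P ih => simp [lift, ih (show FreeVarsLt k P from hP) h]

theorem subst_eq_self {P : Proc} {k k' : ℕ} (S : Proc) (hP : FreeVarsLt k P) (h : k ≤ k') :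
    subst P k' S = P := by
  induction P generalizing k k' with
  | nil => rfl
  | pvar n =>
    have hn : n < k' := lt_of_lt_of_le hP h
    simp [subst, hn.ne, hn.not_gt]
  | par P Q ihP ihQ => simp [subst, ihP hP.1 h, ihQ hP.2 h]
  | inp a P ih => simp [subst, ih (show FreeVarsLt (k + 1) P from hP) (Nat.succ_le_succ h)]
  | out a P ih => simp [subst, ih (show FreeVarsLt k P from hP) h]

theorem fnames_lift (d k : ℕ) (P : Proc) : (lift d k P).fnames = P.fnames := by
  induction P generalizing k with
  | pvar n => by_cases h : n < k <;> simp [lift, h, fnames]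
  | _ => simp_all [lift, fnames]

theorem fnames_subst_subset (P : Proc) (k : ℕ) (S : Proc) :
    (subst P k S).fnames ⊆ P.fnames ∪ S.fnames := by
  induction P generalizing k with
  | nil => simp [subst, fnames]
  | pvar n =>
    by_cases h₁ : n = k
    · simp [subst, h₁, fnames, fnames_lift]
    · by_cases h₂ : k < n <;> simp [subst, h₁, h₂, fnames]
  | _ => simp only [subst, fnames]; grind

end Proc

open Proc

namespace SCong

theorem nil_par (P : Proc) : SCong (.par .nil P) P :=
  (parComm _ _).trans (parNil _)

theorem lift {P Q : Proc} (h : SCong P Q) (d k : ℕ) : SCong (P.lift d k) (Q.lift d k) := by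
  induction h generalizing k with
  | refl => exact refl _
  | symm _ ih => exact (ih k).symm
  | trans _ _ ih₁ ih₂ => exact (ih₁ k).trans (ih₂ k)
  | parComm => exact parComm _ _
  | parAssoc => exact parAssoc _ _ _
  | parNil => exact parNil _
  | parCong _ _ ih₁ ih₂ => exact parCong (ih₁ k) (ih₂ k)
  | inpCong a _ ih => exact inpCong a (ih (k + 1))
  | outCong a _ ih => exact outCong a (ih k)

theorem subst {P Q : Proc} (h : SCong P Q) (k : ℕ) (S : Proc) :
    SCong (P.subst k S) (Q.subst k S) := by
  induction h generalizing k with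
  | refl => exact refl _
  | symm _ ih => exact (ih k).symm
  | trans _ _ ih₁ ih₂ => exact (ih₁ k).trans (ih₂ k)
  | parComm => exact parComm _ _
  | parAssoc => exact parAssoc _ _ _
  | parNil => exact parNil _
  | parCong _ _ ih₁ ih₂ => exact parCong (ih₁ k) (ih₂ k)
  | inpCong a _ ih => exact inpCong a (ih (k + 1))
  | outCong a _ ih => exact outCong a (ih k)

theorem subst_right {S S' : Proc} (h : SCong S S') (P : Proc) (k : ℕ) :
    SCong (P.subst k S) (P.subst k S') := by
  induction P generalizing k with
  | nil => exact refl _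
  | pvar n =>
    by_cases h₁ : n = k
    · simpa [Proc.subst, h₁] using h.lift k 0
    · by_cases h₂ : k < n <;> simpa [Proc.subst, h₁, h₂] using refl _
  | par P Q ihP ihQ => exact parCong (ihP k) (ihQ k)
  | inp a P ih => exact inpCong a (ih (k + 1))
  | out a P ih => exact outCong a (ih k)

end SCong

/-- The rules of `Step` without the structural rule `struct`. -/
inductive DirectStep : Proc → Label → Proc → Prop
  | outS (a P) : DirectStep (.out a P) (.outl a P) .nil
  | inpS (a Q P) : DirectStep (.inp a Q) (.inl a P) (Q.subst 0 P)
  | parL {P l P'} (Q) : DirectStep P l P' → DirectStep (.par P Q) l (.par P' Q)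
  | parR {Q l Q'} (P) : DirectStep Q l Q' → DirectStep (.par P Q) l (.par P Q')
  | comm1 {P Q P' Q' a R} : DirectStep P (.outl a R) P' → DirectStep Q (.inl a R) Q' →
      DirectStep (.par P Q) .tau (.par P' Q')
  | comm2 {P Q P' Q' a R} : DirectStep P (.inl a R) P' → DirectStep Q (.outl a R) Q' →
      DirectStep (.par P Q) .tau (.par P' Q')

/-- Only output payloads need comparing up to `SCong`: input payloads are chosen freely. -/
inductive LabelCong : Label → Label → Prop
  | outl (a) {P P'} : SCong P P' → LabelCong (.outl a P) (.outl a P')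
  | inl (a P) : LabelCong (.inl a P) (.inl a P)
  | tau : LabelCong .tau .tau

namespace LabelCong

theorem refl : ∀ l, LabelCong l l
  | .tau => .tau
  | .outl a P => .outl a (SCong.refl P)
  | .inl a P => .inl a P

theorem symm {l l' : Label} : LabelCong l l' → LabelCong l' l
  | .tau => .tau
  | .outl a h => .outl a h.symm
  | .inl a P => .inl a P

theorem trans {l₁ l₂ l₃ : Label} (h₁ : LabelCong l₁ l₂) (h₂ : LabelCong l₂ l₃) :
    LabelCong l₁ l₃ := by
  cases h₁ <;> cases h₂
  · exact .outl _ (SCong.trans ‹_› ‹_›)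
  · exact .inl _ _
  · exact .tau

end LabelCong

namespace DirectStep

theorem toStep_of_labelCong {P Q : Proc} {l₀ l : Label} (h : DirectStep P l₀ Q)
    (hl : LabelCong l₀ l) : Step P l Q := by
  induction h generalizing l with
  | outS a P =>
    obtain ⟨_, hc⟩ := hl
    exact .struct (.outCong a hc) (.outS a _) (.refl _)
  | inpS a Q P => cases hl; exact .inpS a Q P
  | parL Q _ ih => exact .parL Q (ih hl)
  | parR P _ ih => exact .parR P (ih hl)
  | comm1 _ _ ih₁ ih₂ => cases hl; exact .comm1 (ih₁ (.refl _)) (ih₂ (.refl _))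
  | comm2 _ _ ih₁ ih₂ => cases hl; exact .comm2 (ih₁ (.refl _)) (ih₂ (.refl _))

theorem toStep {P Q : Proc} {l : Label} (h : DirectStep P l Q) : Step P l Q :=
  h.toStep_of_labelCong (.refl l)

theorem inl_congr {Q Y R R' : Proc} {a : Name} (h : DirectStep Q (.inl a R) Y)
    (hR : SCong R R') : ∃ Y', DirectStep Q (.inl a R') Y' ∧ SCong Y Y' := by
  generalize hl : Label.inl a R = l at h
  induction h with
  | inpS b B _ =>
    cases hl
    exact ⟨_, .inpS _ B R', hR.subst_right B 0⟩
  | parL Q _ ih =>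
    obtain ⟨Y', h₁, h₂⟩ := ih hl
    exact ⟨_, .parL Q h₁, .parCong h₂ (.refl _)⟩
  | parR P _ ih =>
    obtain ⟨Y', h₁, h₂⟩ := ih hl
    exact ⟨_, .parR P h₁, .parCong (.refl _) h₂⟩
  | _ => cases hl

end DirectStep

def Simulates (P Q : Proc) : Prop :=
  ∀ ⦃l X⦄, DirectStep P l X → ∃ l' X', DirectStep Q l' X' ∧ LabelCong l l' ∧ SCong X X'

namespace Simulates

theorem refl (P : Proc) : Simulates P P :=
  fun _ _ h => ⟨_, _, h, .refl _, .refl _⟩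

theorem trans {P Q R : Proc} (h₁ : Simulates P Q) (h₂ : Simulates Q R) : Simulates P R := by
  intro l X h
  obtain ⟨l₁, X₁, h₁, hl₁, hs₁⟩ := h₁ h
  obtain ⟨l₂, X₂, h₂, hl₂, hs₂⟩ := h₂ h₁
  exact ⟨l₂, X₂, h₂, hl₁.trans hl₂, hs₁.trans hs₂⟩

theorem of_sameLabel {P Q : Proc}
    (h : ∀ ⦃l X⦄, DirectStep P l X → ∃ X', DirectStep Q l X' ∧ SCong X X') : Simulates P Q :=
  fun l _ hs => (h hs).elim fun X' h' => ⟨l, X', h'.1, .refl l, h'.2⟩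

theorem par_comm (P Q : Proc) : Simulates (.par P Q) (.par Q P) := by
  refine of_sameLabel fun l X h => ?_
  cases h with
  | parL _ h => exact ⟨_, .parR _ h, .parComm _ _⟩
  | parR _ h => exact ⟨_, .parL _ h, .parComm _ _⟩
  | comm1 h₁ h₂ => exact ⟨_, .comm2 h₂ h₁, .parComm _ _⟩
  | comm2 h₁ h₂ => exact ⟨_, .comm1 h₂ h₁, .parComm _ _⟩

theorem par_assoc (P Q R : Proc) : Simulates (.par (.par P Q) R) (.par P (.par Q R)) := by
  refine of_sameLabel fun l X h => ?_
  rcases h with _ | _ | ⟨_, h⟩ | ⟨_, h⟩ | ⟨h₁, h₂⟩ | ⟨h₁, h₂⟩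
  · rcases h with _ | _ | ⟨_, h⟩ | ⟨_, h⟩ | ⟨h₁, h₂⟩ | ⟨h₁, h₂⟩
    · exact ⟨_, .parL _ h, .parAssoc _ _ _⟩
    · exact ⟨_, .parR _ (.parL _ h), .parAssoc _ _ _⟩
    · exact ⟨_, .comm1 h₁ (.parL _ h₂), .parAssoc _ _ _⟩
    · exact ⟨_, .comm2 h₁ (.parL _ h₂), .parAssoc _ _ _⟩
  · exact ⟨_, .parR _ (.parR _ h), .parAssoc _ _ _⟩
  · rcases h₁ with _ | _ | ⟨_, h₁⟩ | ⟨_, h₁⟩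
    · exact ⟨_, .comm1 h₁ (.parR _ h₂), .parAssoc _ _ _⟩
    · exact ⟨_, .parR _ (.comm1 h₁ h₂), .parAssoc _ _ _⟩
  · rcases h₁ with _ | _ | ⟨_, h₁⟩ | ⟨_, h₁⟩
    · exact ⟨_, .comm2 h₁ (.parR _ h₂), .parAssoc _ _ _⟩
    · exact ⟨_, .parR _ (.comm2 h₁ h₂), .parAssoc _ _ _⟩

theorem par_assoc_symm (P Q R : Proc) : Simulates (.par P (.par Q R)) (.par (.par P Q) R) := by
  refine of_sameLabel fun l X h => ?_
  rcases h with _ | _ | ⟨_, h⟩ | ⟨_, h⟩ | ⟨h₁, h₂⟩ | ⟨h₁, h₂⟩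
  · exact ⟨_, .parL _ (.parL _ h), (SCong.parAssoc _ _ _).symm⟩
  · rcases h with _ | _ | ⟨_, h⟩ | ⟨_, h⟩ | ⟨h₁, h₂⟩ | ⟨h₁, h₂⟩
    · exact ⟨_, .parL _ (.parR _ h), (SCong.parAssoc _ _ _).symm⟩
    · exact ⟨_, .parR _ h, (SCong.parAssoc _ _ _).symm⟩
    · exact ⟨_, .comm1 (.parR _ h₁) h₂, (SCong.parAssoc _ _ _).symm⟩
    · exact ⟨_, .comm2 (.parR _ h₁) h₂, (SCong.parAssoc _ _ _).symm⟩
  · rcases h₂ with _ | _ | ⟨_, h₂⟩ | ⟨_, h₂⟩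
    · exact ⟨_, .parL _ (.comm1 h₁ h₂), (SCong.parAssoc _ _ _).symm⟩
    · exact ⟨_, .comm1 (.parL _ h₁) h₂, (SCong.parAssoc _ _ _).symm⟩
  · rcases h₂ with _ | _ | ⟨_, h₂⟩ | ⟨_, h₂⟩
    · exact ⟨_, .parL _ (.comm2 h₁ h₂), (SCong.parAssoc _ _ _).symm⟩
    · exact ⟨_, .comm2 (.parL _ h₁) h₂, (SCong.parAssoc _ _ _).symm⟩

theorem par_nil (P : Proc) : Simulates (.par P .nil) P := by
  refine of_sameLabel fun l X h => ?_
  rcases h with _ | _ | ⟨_, h⟩ | ⟨_, h⟩ | ⟨_, h⟩ | ⟨_, h⟩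
  · exact ⟨_, h, .parNil _⟩
  all_goals cases h

theorem to_par_nil (P : Proc) : Simulates P (.par P .nil) :=
  of_sameLabel fun _ _ h => ⟨_, .parL _ h, (SCong.parNil _).symm⟩

theorem par {P P' Q Q' : Proc} (hP : Simulates P P') (hQ : Simulates Q Q')
    (hPP' : SCong P P') (hQQ' : SCong Q Q') : Simulates (.par P Q) (.par P' Q') := by
  intro l X h
  cases h with
  | parL _ h =>
    obtain ⟨l', X', h', hl, hs⟩ := hP h
    exact ⟨l', _, .parL _ h', hl, .parCong hs hQQ'⟩
  | parR _ h =>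
    obtain ⟨l', X', h', hl, hs⟩ := hQ h
    exact ⟨l', _, .parR _ h', hl, .parCong hPP' hs⟩
  | comm1 h₁ h₂ =>
    obtain ⟨_, _, h₁', ⟨a, hc⟩, hs₁⟩ := hP h₁
    obtain ⟨_, _, h₂', ⟨⟩, hs₂⟩ := hQ h₂
    obtain ⟨Y, h₂'', hY⟩ := h₂'.inl_congr hc
    exact ⟨.tau, _, .comm1 h₁' h₂'', .tau, .parCong hs₁ (hs₂.trans hY)⟩
  | comm2 h₁ h₂ =>
    obtain ⟨_, _, h₂', ⟨a, hc⟩, hs₂⟩ := hQ h₂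
    obtain ⟨_, _, h₁', ⟨⟩, hs₁⟩ := hP h₁
    obtain ⟨Y, h₁'', hY⟩ := h₁'.inl_congr hc
    exact ⟨.tau, _, .comm2 h₁'' h₂', .tau, .parCong (hs₁.trans hY) hs₂⟩

theorem inp {P P' : Proc} (a : Name) (h : SCong P P') : Simulates (.inp a P) (.inp a P') := by
  rintro l X ⟨⟩
  exact ⟨_, _, .inpS a _ _, .refl _, h.subst 0 _⟩

theorem out {P P' : Proc} (a : Name) (h : SCong P P') : Simulates (.out a P) (.out a P') := by
  rintro l X ⟨⟩
  exact ⟨_, _, .outS a _, .outl a h, .refl _⟩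

end Simulates

theorem SCong.simulates {P Q : Proc} (h : SCong P Q) : Simulates P Q ∧ Simulates Q P := by
  induction h with
  | refl P => exact ⟨.refl P, .refl P⟩
  | symm _ ih => exact ih.symm
  | trans _ _ ih₁ ih₂ => exact ⟨ih₁.1.trans ih₂.1, ih₂.2.trans ih₁.2⟩
  | parComm P Q => exact ⟨.par_comm P Q, .par_comm Q P⟩
  | parAssoc P Q R => exact ⟨.par_assoc P Q R, .par_assoc_symm P Q R⟩
  | parNil P => exact ⟨.par_nil P, .to_par_nil P⟩
  | parCong h₁ h₂ ih₁ ih₂ => exact ⟨.par ih₁.1 ih₂.1 h₁ h₂, .par ih₁.2 ih₂.2 h₁.symm h₂.symm⟩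
  | inpCong a h => exact ⟨.inp a h, .inp a h.symm⟩
  | outCong a h => exact ⟨.out a h, .out a h.symm⟩

theorem step_iff_directStep {P Q : Proc} {l : Label} :
    Step P l Q ↔ ∃ l₀ Q₀, DirectStep P l₀ Q₀ ∧ LabelCong l₀ l ∧ SCong Q₀ Q := by
  refine ⟨fun h => ?_, fun ⟨l₀, Q₀, h, hl, hs⟩ => .struct (.refl _) (h.toStep_of_labelCong hl) hs⟩
  induction h with
  | outS a P => exact ⟨_, _, .outS a P, .refl _, .refl _⟩
  | inpS a Q P => exact ⟨_, _, .inpS a Q P, .refl _, .refl _⟩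
  | parL Q _ ih =>
    obtain ⟨l₀, Q₀, h₀, hl, hs⟩ := ih
    exact ⟨l₀, _, .parL Q h₀, hl, .parCong hs (.refl _)⟩
  | parR P _ ih =>
    obtain ⟨l₀, Q₀, h₀, hl, hs⟩ := ih
    exact ⟨l₀, _, .parR P h₀, hl, .parCong (.refl _) hs⟩
  | comm1 _ _ ih₁ ih₂ =>
    obtain ⟨_, _, h₁, ⟨a, hc⟩, hs₁⟩ := ih₁
    obtain ⟨_, _, h₂, ⟨⟩, hs₂⟩ := ih₂
    obtain ⟨Y, h₂', hY⟩ := h₂.inl_congr hc.symm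
    exact ⟨.tau, _, .comm1 h₁ h₂', .tau, .parCong hs₁ (hY.symm.trans hs₂)⟩
  | comm2 _ _ ih₁ ih₂ =>
    obtain ⟨_, _, h₁, ⟨⟩, hs₁⟩ := ih₁
    obtain ⟨_, _, h₂, ⟨a, hc⟩, hs₂⟩ := ih₂
    obtain ⟨Y, h₁', hY⟩ := h₁.inl_congr hc.symm
    exact ⟨.tau, _, .comm2 h₁' h₂, .tau, .parCong (hY.symm.trans hs₁) hs₂⟩
  | struct hPP' _ hQ'Q ih =>
    obtain ⟨l₀, Q₀, h₀, hl, hs⟩ := ih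
    obtain ⟨l₁, Q₁, h₁, hl₁, hs₁⟩ := hPP'.simulates.2 h₀
    exact ⟨l₁, Q₁, h₁, hl₁.symm.trans hl, hs₁.symm.trans (hs.trans hQ'Q)⟩

namespace DirectStep

theorem mem_fnames_of_inl {P X R : Proc} {a : Name} (h : DirectStep P (.inl a R) X) :
    a ∈ P.fnames := by
  generalize hl : Label.inl a R = l at h
  induction h with
  | inpS => cases hl; simp [fnames]
  | parL _ _ ih => simp [fnames, ih hl]
  | parR _ _ ih => simp [fnames, ih hl]
  | _ => cases hl

theorem mem_fnames_of_outl {P X R : Proc} {a : Name} (h : DirectStep P (.outl a R) X) :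
    a ∈ P.fnames := by
  generalize hl : Label.outl a R = l at h
  induction h with
  | outS => cases hl; simp [fnames]
  | parL _ _ ih => simp [fnames, ih hl]
  | parR _ _ ih => simp [fnames, ih hl]
  | _ => cases hl

theorem fnames_subset {P X : Proc} {l : Label} (h : DirectStep P l X) :
    match l with
    | .tau => X.fnames ⊆ P.fnames
    | .outl _ R => X.fnames ∪ R.fnames ⊆ P.fnames
    | .inl _ R => X.fnames ⊆ P.fnames ∪ R.fnames := by
  induction h with
  | outS => simp [fnames]
  | inpS a Q P =>
    have := fnames_subst_subset Q 0 P
    simp only [fnames]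
    grind
  | parL _ _ ih | parR _ _ ih =>
    rename_i l _
    cases l <;> simp only [fnames] at * <;> grind
  | comm1 _ _ ih₁ ih₂ | comm2 _ _ ih₁ ih₂ => simp only [fnames] at *; grind

end DirectStep

theorem Step.not_nil {l : Label} {X : Proc} (h : Step .nil l X) : False := by
  obtain ⟨_, _, h₀, _⟩ := step_iff_directStep.1 h
  cases h₀

namespace StrongBarb

variable {H : Set Name} {P Q : Proc} {α : Barb}

theorem of_scong (h : SCong P Q) (hb : StrongBarb H P α) : StrongBarb H Q α := by
  cases α <;>
  · obtain ⟨ha, A, Z, hst⟩ := hb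
    exact ⟨ha, A, Z, .struct h.symm hst (.refl _)⟩

theorem not_nil : ¬ StrongBarb H .nil α := by
  cases α <;> exact fun ⟨_, _, _, h⟩ => h.not_nil

theorem par_iff {S : Proc} :
    StrongBarb H (.par P S) α ↔ StrongBarb H P α ∨ StrongBarb H S α := by
  refine ⟨fun hb => ?_, fun hb => ?_⟩
  · cases α <;>
    · obtain ⟨ha, A, Z, hst⟩ := hb
      obtain ⟨_, _, h₀, hl, _⟩ := step_iff_directStep.1 hst
      cases hl
      rcases h₀ with _ | _ | ⟨_, h⟩ | ⟨_, h⟩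
      · exact .inl ⟨ha, _, _, h.toStep⟩
      · exact .inr ⟨ha, _, _, h.toStep⟩
  · cases α <;> rcases hb with ⟨ha, A, Z, hst⟩ | ⟨ha, A, Z, hst⟩
    all_goals first
      | exact ⟨ha, A, _, .parL _ hst⟩
      | exact ⟨ha, A, _, .parR _ hst⟩

end StrongBarb

/-- The states of the encoded machine. Channel `0` is `hdN` and channel `1` is `cN`: each
state is one message waiting for its only receiver, possibly next to an idle message on `c`. -/
inductive IsRedex : Proc → Prop
  | hd (A B : Proc) : IsRedex (.par (.out 0 A) (.inp 0 B))
  | hdIdleC (A A' B : Proc) : IsRedex (.par (.out 0 A) (.par (.out 1 A') (.inp 0 B)))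
  | c (A' C : Proc) : IsRedex (.par (.out 1 A') (.inp 1 C))

attribute [simp] IsRedex.hd IsRedex.hdIdleC IsRedex.c

def fire : Proc → Proc
  | .par (.out 0 A) (.inp 0 B) => B.subst 0 A
  | .par (.out 0 A) (.par (.out 1 A') (.inp 0 B)) => .par (.out 1 A') (B.subst 0 A)
  | .par (.out 1 A') (.inp 1 C) => C.subst 0 A'
  | _ => .nil

namespace IsRedex

variable {X Z : Proc}

theorem step_fire (h : IsRedex X) : Step X .tau (fire X) := by
  cases h with
  | hd A B => exact .struct (.refl _) (.comm1 (.outS 0 A) (.inpS 0 B A)) (.nil_par _)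
  | hdIdleC A A' B =>
    exact .struct (.refl _) (.comm1 (.outS 0 A) (.parR _ (.inpS 0 B A))) (.nil_par _)
  | c A' C => exact .struct (.refl _) (.comm1 (.outS 1 A') (.inpS 1 C A')) (.nil_par _)

theorem hidden_of_directStep {l : Label} (h : IsRedex X) (hs : DirectStep X l Z) :
    match l with
    | .tau => True
    | .outl a _ | .inl a _ => a ∈ ({hdN, cN} : Set Name) := by
  cases h <;> rcases hs with _ | _ | ⟨_, hs⟩ | ⟨_, hs⟩ <;>
    (try rcases hs with _ | _ | ⟨_, hs⟩ | ⟨_, hs⟩) <;> (try cases hs) <;> simp [hdN, cN]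

theorem directStep_tau (h : IsRedex X) (hs : DirectStep X .tau Z) : SCong Z (fire X) := by
  cases h <;> rcases hs with _ | _ | ⟨_, hs⟩ | ⟨_, hs⟩ | ⟨hs₁, hs₂⟩ | ⟨hs₁, hs₂⟩ <;>
    (try rcases hs with _ | _ | ⟨_, hs⟩ | ⟨_, hs⟩ | ⟨hs₁, hs₂⟩ | ⟨hs₁, hs₂⟩) <;>
    (try cases hs) <;> (try cases hs₁) <;> (try cases hs₂)
  all_goals first
    | exact .nil_par _
    | cases ‹DirectStep (.out _ _) _ _›
    | (cases ‹DirectStep (.inp _ _) _ _›; exact .nil_par _)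

theorem step_tau (h : IsRedex X) (hs : Step X .tau Z) : SCong Z (fire X) := by
  obtain ⟨_, _, h₀, ⟨⟩, hsc⟩ := step_iff_directStep.1 hs
  exact hsc.symm.trans (h.directStep_tau h₀)

theorem not_strongBarb (h : IsRedex X) (α : Barb) : ¬ StrongBarb {hdN, cN} X α := by
  cases α <;> rintro ⟨ha, _, _, hst⟩ <;> obtain ⟨_, _, h₀, hl, _⟩ := step_iff_directStep.1 hst <;>
    cases hl <;> exact ha (h.hidden_of_directStep h₀)

/-- A context avoiding the hidden names cannot interact with a machine state. -/
theorem step_par_tau {S : Proc} (hX : IsRedex X) (hS : (S.fnames : Set Name) ∩ {hdN, cN} = ∅)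
    (h : Step (.par X S) .tau Z) :
    SCong Z (.par (fire X) S) ∨ ∃ S', DirectStep S .tau S' ∧ SCong Z (.par X S') := by
  obtain ⟨_, _, h₀, ⟨⟩, hsc⟩ := step_iff_directStep.1 h
  have hidden (a : Name) (ha : a ∈ S.fnames) (ha' : a ∈ ({hdN, cN} : Set Name)) : False :=
    (Set.eq_empty_iff_forall_notMem.1 hS) a ⟨ha, ha'⟩
  rcases h₀ with _ | _ | ⟨_, h⟩ | ⟨_, h⟩ | ⟨h₁, h₂⟩ | ⟨h₁, h₂⟩
  · exact .inl (hsc.symm.trans (.parCong (hX.directStep_tau h) (.refl _)))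
  · exact .inr ⟨_, h, hsc.symm⟩
  · exact (hidden _ h₂.mem_fnames_of_inl (hX.hidden_of_directStep h₁)).elim
  · exact (hidden _ h₂.mem_fnames_of_outl (hX.hidden_of_directStep h₁)).elim

end IsRedex

def Runs : ℕ → Proc → Proc → Prop
  | 0, X, Y => X = Y
  | n + 1, X, Y => IsRedex X ∧ Runs n (fire X) Y

open Turing.ToPartrec

/-- `Turing.ToPartrec.step` runs a whole `stepNormal` descent at once; `FineCfg.step` performs
one constructor of the code, or of the continuation, at a time. -/
inductive FineCfg : Type
  | normal : Code → Cont → List ℕ → FineCfg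
  | ret : Cont → List ℕ → FineCfg
  | halt : List ℕ → FineCfg

namespace FineCfg

def step : FineCfg → Option FineCfg
  | normal .zero' k v => some (ret k (0 :: v))
  | normal .succ k v => some (ret k [v.headI.succ])
  | normal .tail k v => some (ret k v.tail)
  | normal (.cons f fs) k v => some (normal f (.cons₁ fs v k) v)
  | normal (.comp f g) k v => some (normal g (.comp f k) v)
  | normal (.case f g) k v =>
    some (match v.headI with
      | 0 => normal f k v.tail
      | n + 1 => normal g k (n :: v.tail))
  | normal (.fix f) k v => some (normal f (.fix f k) v)
  | ret .halt v => some (halt v)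
  | ret (.cons₁ fs as k) v => some (normal fs (.cons₂ v k) as)
  | ret (.cons₂ ns k) v => some (ret k (ns.headI :: v))
  | ret (.comp f k) v => some (normal f k v)
  | ret (.fix f k) v => some (if v.headI = 0 then ret k v.tail else normal f (.fix f k) v.tail)
  | halt _ => none

/-- The number of HOcore communications that realise one `step` from this configuration. -/
def microSteps : FineCfg → ℕ
  | normal .zero' _ _ => 2
  | normal .succ _ [] => 4
  | normal .succ _ (_ :: _) => 6
  | normal .tail _ [] => 4
  | normal .tail _ (_ :: _) => 6
  | normal (.cons _ _) _ _ => 2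
  | normal (.comp _ _) _ _ => 2
  | normal (.case _ _) _ [] => 4
  | normal (.case _ _) _ (0 :: _) => 8
  | normal (.case _ _) _ ((_ + 1) :: _) => 9
  | normal (.fix _) _ _ => 2
  | ret .halt _ => 1
  | ret (.cons₁ _ _ _) _ => 1
  | ret (.cons₂ [] _) _ => 3
  | ret (.cons₂ (_ :: _) _) _ => 5
  | ret (.comp _ _) _ => 1
  | ret (.fix _ _) [] => 5
  | ret (.fix _ _) (0 :: _) => 9
  | ret (.fix _ _) ((_ + 1) :: _) => 10
  | halt _ => 0

end FineCfg

/-! Data are Scott-encoded: a value receives its two case branches on `hd` and then on `c`.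
Zero runs the first branch; a successor (resp. a cons cell) sends its predecessor (resp. its
head on `hd` and its tail on `c`) and runs the second branch. -/

namespace Encode

def zero : Proc := .inp 0 (.inp 1 (.pvar 1))

def succ (m : Proc) : Proc := .inp 0 (.inp 1 (.par (.out 0 m) (.pvar 0)))

def cons (h t : Proc) : Proc :=
  .inp 0 (.inp 1 (.par (.out 0 h) (.par (.out 1 t) (.pvar 0))))

def nat : ℕ → Proc
  | 0 => zero
  | n + 1 => succ (nat n)

def list : List ℕ → Proc
  | [] => zero
  | n :: v => cons (nat n) (list v)

/-- Body of `Cont.cons₂`: `#0` is the returned value and `NS` the stored list; `K₀` and `K₂` are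
the stored continuation as seen under 0 resp. 2 further binders. -/
def cons₂Body (NS K₀ K₂ : Proc) : Proc :=
  .par (.out 0 (.par (.out 0 (cons zero (.pvar 2))) K₀))
    (.par (.out 1 (.inp 0 (.inp 1 (.par (.out 0 (cons (.pvar 3) (.pvar 4))) K₂)))) NS)

/-- Loop test of `Cont.fix`: `#1` is the copy of itself to reinstall, `#0` the returned value;
`K₀`, `K₂` are the stored continuation under 0 resp. 2 further binders and `F` the loop body. -/
def fixTest (K₀ K₂ F : Proc) : Proc :=
  .par (.out 0 (.par (.out 0 zero) K₀))
    (.par (.out 1 (.inp 0 (.inp 1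
      (.par (.out 0 (.par (.out 0 (.pvar 0)) K₂))
        (.par (.out 1 (.inp 0
          (.par (.out 0 (.inp 0 (.par (.out 0 (.pvar 5)) (.par (.out 1 (.pvar 0)) (.pvar 5)))))
            (.par (.out 1 (.pvar 1)) F))))
        (.pvar 1))))))
    (.pvar 0))

/-- Body of a code, run with the continuation in `#1` and the argument in `#0`;
`W` is what the halting continuation turns into. -/
def codeBody (W : Proc) : Code → Proc
  | .zero' => .par (.out 0 (cons zero (.pvar 2))) (.pvar 1)
  | .succ => .par (.out 0 (.par (.out 0 (cons (succ zero) zero)) (.pvar 1)))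
      (.par (.out 1 (.inp 0 (.inp 1
        (.par (.out 0 (cons (succ (.pvar 5)) zero)) (.pvar 3)))))
      (.pvar 0))
  | .tail => .par (.out 0 (.par (.out 0 zero) (.pvar 1)))
      (.par (.out 1 (.inp 0 (.inp 1 (.par (.out 0 (.pvar 0)) (.pvar 3)))))
      (.pvar 0))
  | .cons f fs => .par (.out 0 (.inp 0
      (.par (.out 0 (.inp 0 (cons₂Body (.pvar 1) (.pvar 3) (.pvar 5))))
        (.par (.out 1 (.pvar 1)) (.inp 0 (.inp 1 (codeBody W fs)))))))
      (.par (.out 1 (.pvar 0)) (.inp 0 (.inp 1 (codeBody W f))))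
  | .comp f g => .par (.out 0 (.inp 0
      (.par (.out 0 (.pvar 2)) (.par (.out 1 (.pvar 0)) (.inp 0 (.inp 1 (codeBody W f)))))))
      (.par (.out 1 (.pvar 0)) (.inp 0 (.inp 1 (codeBody W g))))
  | .case f g => .par (.out 0 (.par (.out 0 (.pvar 1))
        (.par (.out 1 zero) (.inp 0 (.inp 1 (codeBody W f))))))
      (.par (.out 1 (.inp 0 (.inp 1
        (.par (.out 0 (.par (.out 0 (.pvar 3)) (.par (.out 1 (.pvar 0))
            (.inp 0 (.inp 1 (codeBody W f))))))
          (.par (.out 1 (.inp 0 (.par (.out 0 (.pvar 4))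
            (.par (.out 1 (cons (.pvar 2) (.pvar 3))) (.inp 0 (.inp 1 (codeBody W g)))))))
          (.pvar 1))))))
      (.pvar 0))
  | .fix f => .par (.out 0 (.inp 0
      (.par (.out 0 (.inp 0 (.inp 1
          (fixTest (.pvar 4) (.pvar 6) (.inp 0 (.inp 1 (codeBody W f)))))))
        (.par (.out 1 (.pvar 0))
          (.inp 0 (.inp 1 (fixTest (.pvar 4) (.pvar 6) (.inp 0 (.inp 1 (codeBody W f))))))))))
      (.par (.out 1 (.pvar 0)) (.inp 0 (.inp 1 (codeBody W f))))

def code (W : Proc) (c : Code) : Proc := .inp 0 (.inp 1 (codeBody W c))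

/-- Body of a continuation, run with the returned value in `#0`. -/
def contBody (W : Proc) : Cont → Proc
  | .halt => W
  | .cons₁ fs as k =>
    .par (.out 0 (.inp 0 (cons₂Body (.pvar 1) (.inp 0 (contBody W k)) (.inp 0 (contBody W k)))))
      (.par (.out 1 (list as)) (code W fs))
  | .cons₂ ns k => cons₂Body (list ns) (.inp 0 (contBody W k)) (.inp 0 (contBody W k))
  | .comp f k => .par (.out 0 (.inp 0 (contBody W k))) (.par (.out 1 (.pvar 0)) (code W f))
  | .fix f k =>
    .par (.out 0 (.inp 0 (.inp 1
        (fixTest (.inp 0 (contBody W k)) (.inp 0 (contBody W k)) (code W f)))))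
      (.par (.out 1 (.pvar 0))
        (.inp 0 (.inp 1 (fixTest (.inp 0 (contBody W k)) (.inp 0 (contBody W k)) (code W f)))))

def cont (W : Proc) (k : Cont) : Proc := .inp 0 (contBody W k)

def cfg (W : Proc) : FineCfg → Proc
  | .normal c k v => .par (.out 0 (cont W k)) (.par (.out 1 (list v)) (code W c))
  | .ret k v => .par (.out 0 (list v)) (.inp 0 (contBody W k))
  | .halt _ => W

theorem freeVarsLt_nat (n k : ℕ) : FreeVarsLt k (nat n) := by
  induction n generalizing k with
  | zero => simp [nat, zero, FreeVarsLt]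
  | succ n ih => simpa [nat, succ, FreeVarsLt] using ih (k + 2)

theorem freeVarsLt_list (v : List ℕ) (k : ℕ) : FreeVarsLt k (list v) := by
  induction v generalizing k with
  | nil => simp [list, zero, FreeVarsLt]
  | cons n v ih => simpa [list, cons, FreeVarsLt] using ⟨freeVarsLt_nat n _, ih _⟩

theorem freeVarsLt_codeBody (W : Proc) (c : Code) : FreeVarsLt 2 (codeBody W c) := by
  induction c <;> simp only [codeBody, cons₂Body, fixTest, cons, succ, zero, FreeVarsLt] <;>
    and_intros <;> first | omega | trivial | (refine FreeVarsLt.mono ?_ ‹_›; omega)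

theorem freeVarsLt_code (W : Proc) (c : Code) (k : ℕ) : FreeVarsLt k (code W c) :=
  (freeVarsLt_codeBody W c).mono (by omega)

theorem freeVarsLt_contBody {W : Proc} (hW : FreeVarsLt 0 W) (k : Cont) :
    FreeVarsLt 1 (contBody W k) := by
  induction k <;> simp only [contBody, cons₂Body, fixTest, cons, zero, FreeVarsLt] <;>
    and_intros <;>
    first
    | omega
    | trivial
    | exact freeVarsLt_list _ _
    | exact freeVarsLt_code _ _ _
    | (refine FreeVarsLt.mono ?_ ‹_›; omega)

@[simp] theorem subst_nat (n j : ℕ) (S : Proc) : (nat n).subst j S = nat n :=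
  subst_eq_self S (freeVarsLt_nat n 0) (Nat.zero_le j)

@[simp] theorem lift_nat (n d j : ℕ) : (nat n).lift d j = nat n :=
  lift_eq_self d (freeVarsLt_nat n 0) (Nat.zero_le j)

@[simp] theorem subst_list (v : List ℕ) (j : ℕ) (S : Proc) : (list v).subst j S = list v :=
  subst_eq_self S (freeVarsLt_list v 0) (Nat.zero_le j)

@[simp] theorem lift_list (v : List ℕ) (d j : ℕ) : (list v).lift d j = list v :=
  lift_eq_self d (freeVarsLt_list v 0) (Nat.zero_le j)

theorem subst_codeBody (W : Proc) (c : Code) {j : ℕ} (S : Proc) (h : 2 ≤ j) :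
    (codeBody W c).subst j S = codeBody W c :=
  subst_eq_self S (freeVarsLt_codeBody W c) h

theorem lift_codeBody (W : Proc) (c : Code) (d : ℕ) {j : ℕ} (h : 2 ≤ j) :
    (codeBody W c).lift d j = codeBody W c :=
  lift_eq_self d (freeVarsLt_codeBody W c) h

variable {W : Proc} (hW : FreeVarsLt 0 W)
include hW

theorem subst_contBody (k : Cont) {j : ℕ} (S : Proc) (h : 1 ≤ j) :
    (contBody W k).subst j S = contBody W k :=
  subst_eq_self S (freeVarsLt_contBody hW k) h

theorem lift_contBody (k : Cont) (d : ℕ) {j : ℕ} (h : 1 ≤ j) :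
    (contBody W k).lift d j = contBody W k :=
  lift_eq_self d (freeVarsLt_contBody hW k) h

theorem runs_microSteps {c c' : FineCfg} (h : c.step = some c') :
    Runs c.microSteps (cfg W c) (cfg W c') := by
  rcases c with ⟨c, k, v⟩ | ⟨k, v⟩ | v
  on_goal 3 => cases h
  on_goal 2 => rcases k with _ | _ | ⟨_ | _, _⟩ | _ | _ <;> rcases v with _ | ⟨_ | _, _⟩
  on_goal 1 => rcases c <;> rcases v with _ | ⟨_ | _, _⟩
  all_goals
    obtain rfl := Option.some.inj h
    simp [Runs, FineCfg.microSteps, cfg, fire, code, cont, codeBody, contBody, list, nat, cons,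
      succ, zero, cons₂Body, fixTest, subst, lift, subst_eq_self _ hW, subst_codeBody,
      lift_codeBody, subst_contBody hW, lift_contBody hW]

end Encode

open StateTransition

namespace FineCfg

theorem microSteps_pos {c c' : FineCfg} (h : c.step = some c') : 0 < c.microSteps := by
  rcases c with ⟨c, k, v⟩ | ⟨k, v⟩ | v
  · cases c <;> rcases v with _ | ⟨_ | _, _⟩ <;> simp [microSteps]
  · rcases k with _ | _ | ⟨_ | _, _⟩ | _ | _ <;> rcases v with _ | ⟨_ | _, _⟩ <;> simp [microSteps]
  · cases h

theorem exists_step_of_not_dom {c : FineCfg} (h : ¬ (eval step c).Dom) :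
    ∃ c', c.step = some c' ∧ ¬ (eval step c').Dom := by
  rcases hc : c.step with _ | c'
  · exact (h (Part.dom_iff_mem.2 ⟨c, mem_eval.2 ⟨.refl, hc⟩⟩)).elim
  · exact ⟨c', rfl, by rwa [← reaches_eval (Relation.ReflTransGen.single hc)]⟩

theorem exists_reaches_halt_of_dom {c : FineCfg} (h : (eval step c).Dom) :
    ∃ v, Reaches step c (halt v) := by
  obtain ⟨c', hc'⟩ := Part.dom_iff_mem.1 h
  obtain ⟨hr, hnone⟩ := mem_eval.1 hc'
  rcases c' with ⟨c', k, v⟩ | ⟨k, v⟩ | v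
  · cases c' <;> cases hnone
  · cases k <;> cases hnone
  · exact ⟨v, hr⟩

end FineCfg

theorem Encode.exists_runs_of_not_dom {c : FineCfg} (h : ¬ (eval FineCfg.step c).Dom) :
    ∃ c' n, ¬ (eval FineCfg.step c').Dom ∧
      ∀ W, FreeVarsLt 0 W → Runs (n + 1) (cfg W c) (cfg W c') := by
  obtain ⟨c', hc', hdiv⟩ := FineCfg.exists_step_of_not_dom h
  obtain ⟨n, hn⟩ := Nat.exists_eq_add_one_of_ne_zero (FineCfg.microSteps_pos hc').ne'
  exact ⟨c', n, hdiv, fun W hW => hn ▸ Encode.runs_microSteps hW hc'⟩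

namespace IsStrongBarbedBisim

variable {H : Set Name} {R : Proc → Proc → Prop} (hR : IsStrongBarbedBisim H R)
include hR

/-- Machine states are deterministic, so the defender must follow the attacker's run. -/
theorem runs {n : ℕ} {X X' Y Y' P Q : Proc} (hX : Runs n X X') (hY : Runs n Y Y')
    (hPQ : R P Q) (hP : SCong P X) (hQ : SCong Q Y) :
    ∃ P' Q', R P' Q' ∧ SCong P' X' ∧ SCong Q' Y' := by
  induction n generalizing X Y P Q with
  | zero => exact ⟨P, Q, hPQ, hX ▸ hP, hY ▸ hQ⟩
  | succ n ih =>
    obtain ⟨hXr, hX⟩ := hX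
    obtain ⟨hYr, hY⟩ := hY
    obtain ⟨Q', hQ', hrel⟩ := (hR.2 P Q hPQ).2.2 _ (.struct hP hXr.step_fire (.refl _))
    exact ih hX hY hrel (.refl _) (hYr.step_tau (.struct hQ.symm hQ' (.refl _)))

theorem reaches {Wa Wb : Proc} (hWa : FreeVarsLt 0 Wa) (hWb : FreeVarsLt 0 Wb)
    {c c' : FineCfg} (hc : Reaches FineCfg.step c c') {P Q : Proc} (hPQ : R P Q)
    (hP : SCong P (Encode.cfg Wa c)) (hQ : SCong Q (Encode.cfg Wb c)) :
    ∃ P' Q', R P' Q' ∧ SCong P' (Encode.cfg Wa c') ∧ SCong Q' (Encode.cfg Wb c') := by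
  induction hc using Relation.ReflTransGen.head_induction_on generalizing P Q with
  | refl => exact ⟨P, Q, hPQ, hP, hQ⟩
  | head hstep _ ih =>
    obtain ⟨P', Q', hrel, hP', hQ'⟩ :=
      hR.runs (Encode.runs_microSteps hWa hstep) (Encode.runs_microSteps hWb hstep) hPQ hP hQ
    exact ih hrel hP' hQ'

end IsStrongBarbedBisim

/-- A halting run ends in `out a nil` on one side and in `nil` on the other. -/
theorem not_strongBarbedEquiv_of_reaches_halt {H : Set Name} {a : Name} (ha : a ∉ H)
    {c : FineCfg} {v : List ℕ} (hc : Reaches FineCfg.step c (.halt v)) :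
    ¬ StrongBarbedEquiv H (Encode.cfg (.out a .nil) c) (Encode.cfg .nil c) := by
  rintro ⟨R, hR, hPQ⟩
  obtain ⟨P', Q', hrel, hP', hQ'⟩ :=
    hR.reaches (Wa := .out a .nil) (Wb := .nil) trivial trivial hc hPQ (.refl _) (.refl _)
  have hbarb : StrongBarb H P' (.outb a) := ⟨ha, .nil, .nil, .struct hP' (.outS a .nil) (.refl _)⟩
  exact StrongBarb.not_nil (((hR.2 P' Q' hrel).1 _ hbarb).of_scong hQ')

/-- The bisimulation for a diverging run: corresponding states of the two encodings, next to a
common context. -/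
def Synchronized (Wa Wb P Q : Proc) : Prop :=
  ∃ c n X Y S, ¬ (eval FineCfg.step c).Dom ∧ Runs (n + 1) X (Encode.cfg Wa c) ∧
    Runs (n + 1) Y (Encode.cfg Wb c) ∧ (S.fnames : Set Name) ∩ {hdN, cN} = ∅ ∧
    SCong P (.par X S) ∧ SCong Q (.par Y S)

namespace Synchronized

variable {Wa Wb P Q : Proc}

theorem symm (h : Synchronized Wa Wb P Q) : Synchronized Wb Wa Q P :=
  let ⟨c, n, X, Y, S, hc, hX, hY, hS, hP, hQ⟩ := h
  ⟨c, n, Y, X, S, hc, hY, hX, hS, hQ, hP⟩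

theorem of_runs (hWa : FreeVarsLt 0 Wa) (hWb : FreeVarsLt 0 Wb) {c : FineCfg} {n : ℕ}
    {X Y S : Proc} (hc : ¬ (eval FineCfg.step c).Dom) (hX : Runs n X (Encode.cfg Wa c))
    (hY : Runs n Y (Encode.cfg Wb c)) (hS : (S.fnames : Set Name) ∩ {hdN, cN} = ∅)
    (hP : SCong P (.par X S)) (hQ : SCong Q (.par Y S)) : Synchronized Wa Wb P Q := by
  cases n with
  | succ n => exact ⟨c, n, X, Y, S, hc, hX, hY, hS, hP, hQ⟩
  | zero =>
    obtain ⟨c', m, hc', hrun⟩ := Encode.exists_runs_of_not_dom hc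
    exact ⟨c', m, X, Y, S, hc', hX ▸ hrun Wa hWa, hY ▸ hrun Wb hWb, hS, hP, hQ⟩

theorem strongBarb (h : Synchronized Wa Wb P Q) {α : Barb}
    (hb : StrongBarb {hdN, cN} P α) : StrongBarb {hdN, cN} Q α := by
  obtain ⟨c, n, X, Y, S, -, ⟨hX, -⟩, -, -, hP, hQ⟩ := h
  rcases StrongBarb.par_iff.1 (hb.of_scong hP) with hXb | hSb
  · exact (hX.not_strongBarb α hXb).elim
  · exact (StrongBarb.par_iff.2 (.inr hSb)).of_scong hQ.symm

theorem par (h : Synchronized Wa Wb P Q) {S' : Proc}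
    (hS' : (S'.fnames : Set Name) ∩ {hdN, cN} = ∅) :
    Synchronized Wa Wb (.par P S') (.par Q S') := by
  obtain ⟨c, n, X, Y, S, hc, hX, hY, hS, hP, hQ⟩ := h
  refine ⟨c, n, X, Y, .par S S', hc, hX, hY, ?_, ?_, ?_⟩
  · simp only [fnames, Finset.coe_union, Set.union_inter_distrib_right, hS, hS',
      Set.union_empty]
  · exact (SCong.parCong hP (.refl _)).trans (.parAssoc _ _ _)
  · exact (SCong.parCong hQ (.refl _)).trans (.parAssoc _ _ _)

theorem step_tau (hWa : FreeVarsLt 0 Wa) (hWb : FreeVarsLt 0 Wb)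
    (h : Synchronized Wa Wb P Q) {P' : Proc} (hP' : Step P .tau P') :
    ∃ Q', Step Q .tau Q' ∧ Synchronized Wa Wb P' Q' := by
  obtain ⟨c, n, X, Y, S, hc, ⟨hXr, hX⟩, ⟨hYr, hY⟩, hS, hP, hQ⟩ := h
  rcases hXr.step_par_tau hS (.struct hP.symm hP' (.refl _)) with hsc | ⟨S', hS', hsc⟩
  · exact ⟨_, .struct hQ (.parL _ hYr.step_fire) (.refl _),
      of_runs hWa hWb hc hX hY hS hsc (.refl _)⟩
  · have hS'' : (S'.fnames : Set Name) ∩ {hdN, cN} = ∅ :=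
      Set.subset_eq_empty (Set.inter_subset_inter_left _ (by exact_mod_cast hS'.fnames_subset)) hS
    exact ⟨_, .struct hQ (.parR _ hS'.toStep) (.refl _),
      c, n, X, Y, S', hc, ⟨hXr, hX⟩, ⟨hYr, hY⟩, hS'', hsc, .refl _⟩

end Synchronized

theorem isStrongBarbedBisim_synchronized {Wa Wb : Proc} (hWa : FreeVarsLt 0 Wa)
    (hWb : FreeVarsLt 0 Wb) :
    IsStrongBarbedBisim {hdN, cN} fun P Q => Synchronized Wa Wb P Q ∨ Synchronized Wb Wa P Q := by
  refine ⟨fun P Q h => h.symm.imp Synchronized.symm Synchronized.symm, fun P Q h => ?_⟩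
  rcases h with h | h
  · exact ⟨fun α => h.strongBarb, fun S hS => .inl (h.par hS),
      fun P' hP' => (h.step_tau hWa hWb hP').imp fun _ => And.imp_right .inl⟩
  · exact ⟨fun α => h.strongBarb, fun S hS => .inr (h.par hS),
      fun P' hP' => (h.step_tau hWb hWa hP').imp fun _ => And.imp_right .inr⟩

theorem strongBarbedEquiv_of_not_dom {Wa Wb : Proc} (hWa : FreeVarsLt 0 Wa)
    (hWb : FreeVarsLt 0 Wb) {c : FineCfg} (hc : ¬ (eval FineCfg.step c).Dom) :
    StrongBarbedEquiv {hdN, cN} (Encode.cfg Wa c) (Encode.cfg Wb c) :=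
  ⟨_, isStrongBarbedBisim_synchronized hWa hWb,
    .inl (.of_runs (n := 0) hWa hWb hc rfl rfl (by simp [fnames]) (SCong.parNil _).symm
      (SCong.parNil _).symm)⟩

namespace FineCfg

def ofCfg : Cfg → FineCfg
  | .halt v => halt v
  | .ret k v => ret k v

theorem reaches₁_stepNormal (c : Code) (k : Cont) (v : List ℕ) :
    Reaches₁ step (normal c k v) (ofCfg (stepNormal c k v)) := by
  induction c generalizing k v with
  | zero' | succ | tail => exact .single rfl
  | cons f fs ihf => exact .head rfl (ihf _ v)
  | comp f g _ ihg => exact .head rfl (ihg _ v)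
  | case f g ihf ihg =>
    rcases hv : v.headI with _ | n
    · have h : stepNormal (f.case g) k v = stepNormal f k v.tail := by simp [stepNormal, hv]
      exact h ▸ .head (show _ ∈ step _ by simp [step, hv]) (ihf k v.tail)
    · have h : stepNormal (f.case g) k v = stepNormal g k (n :: v.tail) := by
        simp [stepNormal, hv]
      exact h ▸ .head (show _ ∈ step _ by simp [step, hv]) (ihg k (n :: v.tail))
  | fix f ihf => exact .head rfl (ihf _ v)

theorem reaches₁_stepRet (k : Cont) (v : List ℕ) :
    Reaches₁ step (ret k v) (ofCfg (stepRet k v)) := by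
  induction k generalizing v with
  | halt => exact .single rfl
  | cons₁ fs as k => exact .head rfl (reaches₁_stepNormal fs _ as)
  | cons₂ ns k ih => exact .head rfl (ih _)
  | comp f k => exact .head rfl (reaches₁_stepNormal f k v)
  | fix f k ih =>
    rcases hv : v.headI with _ | n
    · have h : stepRet (.fix f k) v = stepRet k v.tail := by simp [stepRet, hv]
      exact h ▸ .head (show _ ∈ step _ by simp [step, hv]) (ih v.tail)
    · have h : stepRet (.fix f k) v = stepNormal f (.fix f k) v.tail := by simp [stepRet, hv]
      exact h ▸ .head (show _ ∈ step _ by simp [step, hv]) (reaches₁_stepNormal f _ v.tail)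

theorem respects_ofCfg : Respects Turing.ToPartrec.step step fun c c' => c' = ofCfg c := by
  rintro (v | ⟨k, v⟩) _ rfl
  · exact rfl
  · exact ⟨_, rfl, reaches₁_stepRet k v⟩

theorem eval_dom_iff (c : Code) (v : List ℕ) :
    (eval step (normal c .halt v)).Dom ↔ (c.eval v).Dom := by
  rw [reaches_eval (reaches₁_stepNormal c .halt v).to_reflTransGen,
    tr_eval_dom respects_ofCfg rfl, stepNormal_eval, Part.map_eq_map]
  exact Iff.rfl

end FineCfg

theorem strongBarbedEquiv_iff_not_dom (c : Code) (v : List ℕ) :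
    StrongBarbedEquiv {hdN, cN} (Encode.cfg (.out 2 .nil) (.normal c .halt v))
      (Encode.cfg .nil (.normal c .halt v)) ↔ ¬ (c.eval v).Dom := by
  rw [← FineCfg.eval_dom_iff]
  refine ⟨fun he hdom => ?_,
    strongBarbedEquiv_of_not_dom (Wa := .out 2 .nil) (Wb := .nil) trivial trivial⟩
  obtain ⟨v, hv⟩ := FineCfg.exists_reaches_halt_of_dom hdom
  exact not_strongBarbedEquiv_of_reaches_halt (by simp [hdN, cN]) hv he

theorem exists_code_eval_dom_iff :
    ∃ u : Code, ∀ d : Nat.Partrec.Code,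
      (u.eval [Encodable.encode d]).Dom ↔ (d.eval 0).Dom := by
  have hU : Nat.Partrec' (n := 1) fun v => (Denumerable.ofNat Nat.Partrec.Code v.head).eval 0 :=
    Nat.Partrec'.part_iff₁.2
      (Nat.Partrec.Code.eval_part.comp (Computable.ofNat _) (Computable.const 0))
  obtain ⟨u, hu⟩ := Code.exists_code hU
  refine ⟨u, fun d => ?_⟩
  have h : u.eval [Encodable.encode d] =
      pure <$> (Denumerable.ofNat Nat.Partrec.Code (Encodable.encode d)).eval 0 :=
    hu ⟨[Encodable.encode d], rfl⟩
  simp [h]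

theorem primrec_encodeProc_nat : Primrec fun n => encodeProc (Encode.nat n) := by
  -- the code of `Encode.succ m` in terms of the code `x` of `m`
  have hsucc : Primrec fun x : ℕ =>
      5 * Nat.pair 0 (5 * Nat.pair 1 (5 * Nat.pair (5 * Nat.pair 0 x + 4) 1 + 2) + 3) + 3 := by
    repeat' first
      | exact Primrec.id
      | with_reducible exact Primrec.const _
      | with_reducible refine Primrec.nat_add.comp ?_ ?_
      | with_reducible refine Primrec.nat_mul.comp ?_ ?_
      | with_reducible refine Primrec₂.natPair.comp ?_ ?_
  refine (Primrec.nat_rec₁ (encodeProc Encode.zero) (hsucc.comp Primrec.snd).to₂).of_eq fun n => ?_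
  induction n with
  | zero => rfl
  | succ n ih => simp [ih, Encode.nat, Encode.succ, encodeProc]

theorem primrec_encodeProc_cfg (W : Proc) (c : Code) :
    Primrec fun n => encodeProc (Encode.cfg W (.normal c .halt [n])) := by
  simp only [Encode.cfg, Encode.list, Encode.cons, encodeProc]
  -- at default transparency, failed unifications would try to evaluate the large numerals
  repeat' with_reducible first
    | exact primrec_encodeProc_nat
    | exact Primrec.const _
    | refine Primrec.nat_add.comp ?_ ?_
    | refine Primrec.nat_mul.comp ?_ ?_
    | refine Primrec₂.natPair.comp ?_ ?_

theorem exists_pair_eq_and_iff {α : Type*} {enc : α → ℕ} (henc : Function.Injective enc)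
    (R : α → α → Prop) (P Q : α) :
    (∃ P' Q', Nat.pair (enc P') (enc Q') = Nat.pair (enc P) (enc Q) ∧ R P' Q') ↔ R P Q := by
  refine ⟨fun ⟨P', Q', he, hR⟩ => ?_, fun h => ⟨P, Q, rfl, h⟩⟩
  obtain ⟨hP, hQ⟩ := Nat.pair_eq_pair.1 he
  rwa [henc hP, henc hQ] at hR

theorem strong_barbed_equiv_undecidable_general
    (enc : Proc → ℕ) (henc : Function.Injective enc)
    (heff₁ : ∃ f : ℕ → ℕ, Computable f ∧ ∀ P, f (encodeProc P) = enc P) :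
    ¬ ComputablePred (fun n : ℕ =>
        ∃ P Q : Proc, Nat.pair (enc P) (enc Q) = n ∧
          StrongBarbedEquiv ({hdN, cN} : Set Name) P Q) := by
  obtain ⟨f, hf, hfe⟩ := heff₁
  obtain ⟨u, hu⟩ := exists_code_eval_dom_iff
  let encAt (W : Proc) (d : Nat.Partrec.Code) : ℕ :=
    f (encodeProc (Encode.cfg W (.normal u .halt [Encodable.encode d])))
  have hcomp (W : Proc) : Computable (encAt W) :=
    hf.comp ((primrec_encodeProc_cfg W u).to_comp.comp Computable.encode)
  intro hdec
  have hdiv : ComputablePred fun d : Nat.Partrec.Code => ¬ (d.eval 0).Dom := by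
    refine ComputablePred.computable_of_manyOneReducible
      ⟨fun d => Nat.pair (encAt (.out 2 .nil) d) (encAt .nil d),
        Primrec₂.natPair.to_comp.comp (hcomp _) (hcomp _), fun d => ?_⟩ hdec
    simp only [encAt, hfe, exists_pair_eq_and_iff henc, strongBarbedEquiv_iff_not_dom, hu]
  have hdom := hdiv.not
  simp only [not_not] at hdom
  exact ComputablePred.halting_problem 0 hdom

/-- Strong barbed equivalence is undecidable in HOcore with the two hidden names
`hd` and `c`: for any effective encoding `enc` of processes as natural numbers
(i.e., any injective encoding computably inter-translatable with the canonical
Gödel numbering), the set of codes of pairs of strongly barbed equivalent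
processes is not computable. -/
theorem strong_barbed_equiv_undecidable
    (enc : Proc → ℕ) (henc : Function.Injective enc)
    (heff₁ : ∃ f : ℕ → ℕ, Computable f ∧ ∀ P, f (encodeProc P) = enc P)
    (heff₂ : ∃ g : ℕ → ℕ, Computable g ∧ ∀ P, g (enc P) = encodeProc P) :
    ¬ ComputablePred (fun n : ℕ =>
        ∃ P Q : Proc, Nat.pair (enc P) (enc Q) = n ∧
          StrongBarbedEquiv ({hdN, cN} : Set Name) P Q) :=
  strong_barbed_equiv_undecidable_general enc henc heff₁
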